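/- Let X be a topological space and let C(X,ℂ) be the ring of continuous complex-valued functions on X. Then for all f₁, …, fₙ, g ∈ C(X,ℂ): Z(f₁) ∩ … ∩ Z(fₙ) ⊆ Z(g) if and only if g lies in the Jacobson radical of the ideal of C(X,ℂ) generated by f₁, …, fₙ. -/

import Mathlib

/-!
A point `x` is a common zero of `f₁, …, fₙ` exactly when the maximal ideal of functions vanishing
at `x` contains them, which gives one direction. Conversely, if `g ∉ M` for a maximal ideal
`M ⊇ (f₁, …, fₙ)`, pick `y` with `y g - 1 ∈ M`. The functions `f₁, …, fₙ, y g - 1` have no common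
zero, so `∑ |fᵢ|² + |y g - 1|²` is a nowhere vanishing element of `M`, hence a unit.
-/

namespace ContinuousMap

variable {X 𝕜 : Type*} [TopologicalSpace X]

theorem idealOfSet_compl_singleton_isMaximal [Field 𝕜] [TopologicalSpace 𝕜]
    [IsTopologicalRing 𝕜] (x : X) : (idealOfSet 𝕜 ({x}ᶜ : Set X)).IsMaximal := by
  have hker : idealOfSet 𝕜 ({x}ᶜ : Set X) = RingHom.ker (evalAlgHom 𝕜 𝕜 x) := by
    ext f
    simp
  rw [hker]
  exact RingHom.ker_isMaximal_of_surjective _ fun c => ⟨const X c, rfl⟩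

theorem apply_eq_zero_of_mem_jacobson [Field 𝕜] [TopologicalSpace 𝕜] [IsTopologicalRing 𝕜]
    {I : Ideal C(X, 𝕜)} {g : C(X, 𝕜)} (hg : g ∈ I.jacobson) {x : X}
    (hI : I ≤ idealOfSet 𝕜 ({x}ᶜ : Set X)) : g x = 0 :=
  (mem_idealOfSet_compl_singleton x g).1
    (Ideal.mem_sInf.1 hg ⟨hI, idealOfSet_compl_singleton_isMaximal x⟩)

variable [RCLike 𝕜]

theorem sum_star_mul_self_apply_eq_zero_iff {ι : Type*} (s : Finset ι) (f : ι → C(X, 𝕜))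
    (x : X) : (∑ i ∈ s, star (f i) * f i) x = 0 ↔ ∀ i ∈ s, f i x = 0 := by
  have hx : (∑ i ∈ s, star (f i) * f i) x = ((∑ i ∈ s, ‖f i x‖ ^ 2 : ℝ) : 𝕜) := by
    simp [sum_apply, RCLike.conj_mul]
  rw [hx, RCLike.ofReal_eq_zero, Finset.sum_eq_zero_iff_of_nonneg fun i _ => by positivity]
  simp

theorem span_eq_top_of_forall_exists_ne_zero {S : Set C(X, 𝕜)} (hS : S.Finite)
    (hzero : ∀ x, ∃ f ∈ S, f x ≠ 0) : Ideal.span S = ⊤ := by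
  set w := ∑ f ∈ hS.toFinset, star f * f
  have hw_mem : w ∈ Ideal.span S := Ideal.sum_mem _ fun f hf =>
    Ideal.mul_mem_left _ _ (Ideal.subset_span (hS.mem_toFinset.1 hf))
  have hw_unit : IsUnit w := by
    refine (isUnit_iff_forall_isUnit w).2 fun x => isUnit_iff_ne_zero.2 ?_
    obtain ⟨f, hf, hfx⟩ := hzero x
    rw [Ne, sum_star_mul_self_apply_eq_zero_iff]
    exact fun h => hfx (h f (hS.mem_toFinset.2 hf))
  exact Ideal.eq_top_of_isUnit_mem _ hw_mem hw_unit

theorem mem_jacobson_span_of_forall_apply_eq_zero {S : Set C(X, 𝕜)} (hS : S.Finite)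
    {g : C(X, 𝕜)} (hg : ∀ x, (∀ f ∈ S, f x = 0) → g x = 0) :
    g ∈ (Ideal.span S).jacobson := by
  refine Ideal.mem_sInf.2 fun M ⟨hSM, hM⟩ => ?_
  by_contra hgM
  obtain ⟨y, i, hi, hyi⟩ := hM.exists_inv hgM
  have hyg : y * g - 1 ∈ M := by
    rw [← hyi, sub_add_cancel_left]
    exact M.neg_mem hi
  have htop : Ideal.span (insert (y * g - 1) S) = ⊤ := by
    refine span_eq_top_of_forall_exists_ne_zero (hS.insert _) fun x => ?_
    by_contra! hx
    have hgx : g x = 0 := hg x fun f hf => hx f (Set.mem_insert_of_mem _ hf)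
    simpa [hgx] using hx _ (Set.mem_insert _ _)
  refine hM.ne_top (top_le_iff.1 (htop ▸ Ideal.span_le.2 ?_))
  exact Set.insert_subset hyg (Ideal.span_le.1 hSM)

end ContinuousMap

open ContinuousMap in
theorem stmt_3 {X : Type*} [TopologicalSpace X]
    (n : ℕ) (f : Fin n → C(X, ℂ)) (g : C(X, ℂ)) :
    (⋂ i, {x : X | f i x = 0}) ⊆ {x : X | g x = 0}
      ↔ g ∈ (Ideal.span (Set.range f)).jacobson := by
  constructor
  · intro hZ
    refine mem_jacobson_span_of_forall_apply_eq_zero (Set.finite_range f) fun x hx => hZ ?_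
    simpa using fun i => hx (f i) ⟨i, rfl⟩
  · intro hg x hx
    refine apply_eq_zero_of_mem_jacobson hg (Ideal.span_le.2 <| Set.range_subset_iff.2 fun i => ?_)
    simpa using Set.mem_iInter.1 hx i
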